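/- Let a ∈ C([-1,1]) ∩ C¹(-1,1) with a > 0 on (-1,1), a(±1) = 0, and 1/a ∉ L¹(-1,1). Define H²_a(-1,1) = {u ∈ H¹_a(-1,1) : a u_x ∈ H¹(-1,1)} where H¹_a consists of L² functions locally absolutely continuous on (-1,1) with √a u_x ∈ L². If additionally a ∈ C¹([-1,1]), then for every u ∈ H²_a(-1,1): (i) lim_{x→±1} a(x) u_x(x) = 0, and (ii) the function a·u belongs to H¹₀(-1,1). -/

import Mathlib

open Set MeasureTheory Filter

-- auxiliary lemmas
lemma aux_not_int_right (n : ℕ) (hn : 1 ≤ n) {c x₀ : ℝ} (hc : 0 < c) (hx₀ : x₀ ∈ Ioo (-1:ℝ) 1) :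
    ¬ IntegrableOn (fun x => c / (1 - x) ^ n) (Ioo x₀ 1) := by
  intro h
  have h1 : IntervalIntegrable (fun x => c / (1 - x) ^ n) volume x₀ 1 := by
    rwa [intervalIntegrable_iff_integrableOn_Ioo_of_le hx₀.2.le]
  have h2 := (h1.comp_sub_left 1).symm
  simp only [sub_sub_cancel, sub_self] at h2
  have h3 : IntegrableOn (fun x => c / x ^ n) (Ioo 0 (1 - x₀)) := by
    rwa [intervalIntegrable_iff_integrableOn_Ioo_of_le (by linarith [hx₀.2])] at h2
  have h4 : IntegrableOn (fun x : ℝ => x ^ (-1 : ℝ)) (Ioo 0 (1 - x₀)) := by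
    refine (h3.const_mul ((2:ℝ) ^ (n-1) / c)).mono' ?_ ?_
    · exact (Measurable.aestronglyMeasurable (by measurability))
    · filter_upwards [ae_restrict_mem measurableSet_Ioo] with x hx
      have hxp : 0 < x := hx.1
      have hx2 : x < 2 := by have := hx.2; have := hx₀.1; linarith
      have hxn : (0:ℝ) < x ^ n := pow_pos hxp n
      have key : x⁻¹ * x ^ n = x ^ (n - 1) := by
        have hpow : x ^ n = x ^ (n-1) * x := by rw [← pow_succ]; congr 1; omega
        rw [hpow, mul_comm (x ^ (n-1)) x, ← mul_assoc, inv_mul_cancel₀ hxp.ne', one_mul]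
      rw [Real.rpow_neg_one, norm_inv, Real.norm_eq_abs, abs_of_pos hxp]
      have h5 : x⁻¹ ≤ 2 ^ (n - 1) / x ^ n := by
        rw [le_div_iff₀ hxn, key]
        exact pow_le_pow_left₀ hxp.le (by linarith) _
      calc x⁻¹ ≤ 2 ^ (n-1) / x ^ n := h5
        _ = 2 ^ (n-1) / c * (c / x ^ n) := by field_simp
  rw [intervalIntegral.integrableOn_Ioo_rpow_iff (by linarith [hx₀.2] : (0:ℝ) < 1 - x₀)] at h4
  linarith

lemma aux_not_int_left (n : ℕ) (hn : 1 ≤ n) {c x₀ : ℝ} (hc : 0 < c) (hx₀ : x₀ ∈ Ioo (-1:ℝ) 1) :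
    ¬ IntegrableOn (fun x => c / (x + 1) ^ n) (Ioo (-1) x₀) := by
  intro h
  have h1 : IntervalIntegrable (fun x => c / (x + 1) ^ n) volume (-1) x₀ := by
    rwa [intervalIntegrable_iff_integrableOn_Ioo_of_le hx₀.1.le]
  have h2 := h1.comp_sub_right 1
  simp only [sub_add_cancel, neg_add_cancel] at h2
  have h3 : IntegrableOn (fun x => c / x ^ n) (Ioo 0 (x₀ + 1)) := by
    rwa [intervalIntegrable_iff_integrableOn_Ioo_of_le (by linarith [hx₀.1])] at h2
  have h4 : IntegrableOn (fun x : ℝ => x ^ (-1 : ℝ)) (Ioo 0 (x₀ + 1)) := by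
    refine (h3.const_mul ((2:ℝ) ^ (n-1) / c)).mono' ?_ ?_
    · exact (Measurable.aestronglyMeasurable (by measurability))
    · filter_upwards [ae_restrict_mem measurableSet_Ioo] with x hx
      have hxp : 0 < x := hx.1
      have hx2 : x < 2 := by have := hx.2; have := hx₀.2; linarith
      have hxn : (0:ℝ) < x ^ n := pow_pos hxp n
      have key : x⁻¹ * x ^ n = x ^ (n - 1) := by
        have hpow : x ^ n = x ^ (n-1) * x := by rw [← pow_succ]; congr 1; omega
        rw [hpow, mul_comm (x ^ (n-1)) x, ← mul_assoc, inv_mul_cancel₀ hxp.ne', one_mul]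
      rw [Real.rpow_neg_one, norm_inv, Real.norm_eq_abs, abs_of_pos hxp]
      have h5 : x⁻¹ ≤ 2 ^ (n - 1) / x ^ n := by
        rw [le_div_iff₀ hxn, key]
        exact pow_le_pow_left₀ hxp.le (by linarith) _
      calc x⁻¹ ≤ 2 ^ (n-1) / x ^ n := h5
        _ = 2 ^ (n-1) / c * (c / x ^ n) := by field_simp
  rw [intervalIntegral.integrableOn_Ioo_rpow_iff (by linarith [hx₀.1] : (0:ℝ) < x₀ + 1)] at h4
  linarith

lemma aux_extract_right {P : ℝ → Prop} (h : ∀ᶠ x in nhdsWithin 1 (Ioo (-1:ℝ) 1), P x) :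
    ∃ x₀ ∈ Ioo (-1:ℝ) 1, ∀ x ∈ Ioo x₀ 1, P x := by
  rw [eventually_iff, Metric.mem_nhdsWithin_iff] at h
  obtain ⟨ε, hε, hsub⟩ := h
  refine ⟨max 0 (1 - ε / 2), ⟨lt_of_lt_of_le (by norm_num) (le_max_left _ _),
    max_lt (by norm_num) (by linarith)⟩, fun x hx => ?_⟩
  have hx0 : 0 < x := lt_of_le_of_lt (le_max_left _ _) hx.1
  have hx1 : 1 - ε / 2 < x := lt_of_le_of_lt (le_max_right _ _) hx.1
  have hxm : x ∈ Ioo (-1:ℝ) 1 := ⟨by linarith, hx.2⟩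
  exact hsub ⟨by rw [Metric.mem_ball, Real.dist_eq, abs_sub_lt_iff]; constructor <;> linarith [hx.2], hxm⟩

lemma aux_extract_left {P : ℝ → Prop} (h : ∀ᶠ x in nhdsWithin (-1) (Ioo (-1:ℝ) 1), P x) :
    ∃ x₀ ∈ Ioo (-1:ℝ) 1, ∀ x ∈ Ioo (-1) x₀, P x := by
  rw [eventually_iff, Metric.mem_nhdsWithin_iff] at h
  obtain ⟨ε, hε, hsub⟩ := h
  refine ⟨min 0 (-1 + ε / 2), ⟨lt_min (by norm_num) (by linarith),
    lt_of_le_of_lt (min_le_left _ _) (by norm_num)⟩, fun x hx => ?_⟩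
  have hx0 : x < 0 := lt_of_lt_of_le hx.2 (min_le_left _ _)
  have hx1 : x < -1 + ε / 2 := lt_of_lt_of_le hx.2 (min_le_right _ _)
  have hxm : x ∈ Ioo (-1:ℝ) 1 := ⟨hx.1, by linarith⟩
  exact hsub ⟨by rw [Metric.mem_ball, Real.dist_eq, abs_sub_lt_iff]; constructor <;> linarith [hx.1], hxm⟩


set_option maxHeartbeats 2000000 in
/-- Proposition 1.1 (strongly degenerate case): if `a ∈ C¹([-1,1])`, `a > 0` on
`(-1,1)`, `a(±1) = 0`, and `1/a ∉ L¹(-1,1)`, then for every `u ∈ H²_a(-1,1)`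
(i.e. `u ∈ L²`, locally absolutely continuous on `(-1,1)` with `√a u_x ∈ L²` and
`a u_x ∈ H¹(-1,1)`) one has `a u_x → 0` at `±1` and `a·u ∈ H¹₀(-1,1)`. -/
theorem stmt_8
    (a : ℝ → ℝ)
    (ha_C1 : ContDiffOn ℝ 1 a (Icc (-1:ℝ) 1))
    (ha_pos : ∀ x ∈ Ioo (-1:ℝ) 1, 0 < a x)
    (ha_deg : a (-1) = 0 ∧ a 1 = 0)
    (ha_str : ¬ IntegrableOn (fun x => 1 / a x) (Ioo (-1:ℝ) 1))
    (u u' : ℝ → ℝ)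
    -- u ∈ H¹_a : u ∈ L², locally absolutely continuous on (-1,1) with derivative u',
    -- and √a u' ∈ L²
    (hu_L2 : IntegrableOn (fun x => (u x) ^ 2) (Ioo (-1:ℝ) 1))
    (hu_diff : ∀ x ∈ Ioo (-1:ℝ) 1, HasDerivAt u (u' x) x)
    (hu_a : IntegrableOn (fun x => a x * (u' x) ^ 2) (Ioo (-1:ℝ) 1))
    -- a u' ∈ H¹(-1,1): a u' extends continuously to [-1,1], is differentiable on
    -- (-1,1), and its derivative is in L²(-1,1)
    (v : ℝ → ℝ)
    (hv_eq : ∀ x ∈ Ioo (-1:ℝ) 1, v x = a x * u' x)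
    (hv_cont : ContinuousOn v (Icc (-1:ℝ) 1))
    (hv_diff : DifferentiableOn ℝ v (Ioo (-1:ℝ) 1))
    (hv_L2 : IntegrableOn (fun x => (deriv v x) ^ 2) (Ioo (-1:ℝ) 1)) :
    -- (i) the weighted flux a u' vanishes at the boundary points
    (Tendsto (fun x => a x * u' x) (nhdsWithin (-1) (Ioo (-1:ℝ) 1)) (nhds 0) ∧
     Tendsto (fun x => a x * u' x) (nhdsWithin 1 (Ioo (-1:ℝ) 1)) (nhds 0)) ∧
    -- (ii) a·u ∈ H¹₀(-1,1)
    (Tendsto (fun x => a x * u x) (nhdsWithin (-1) (Ioo (-1:ℝ) 1)) (nhds 0) ∧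
     Tendsto (fun x => a x * u x) (nhdsWithin 1 (Ioo (-1:ℝ) 1)) (nhds 0) ∧
     IntegrableOn (fun x => (a x * u x) ^ 2) (Ioo (-1:ℝ) 1) ∧
     DifferentiableOn ℝ (fun x => a x * u x) (Ioo (-1:ℝ) 1) ∧
     IntegrableOn (fun x => (deriv (fun y => a y * u y) x) ^ 2) (Ioo (-1:ℝ) 1)) := by
  have hIoo : Ioo (-1:ℝ) 1 ⊆ Icc (-1:ℝ) 1 := Ioo_subset_Icc_self
  obtain ⟨g, hg_def⟩ : ∃ g : ℝ → ℝ, g = derivWithin a (Icc (-1) 1) :=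
    ⟨_, rfl⟩
  have hg_cont : ContinuousOn g (Icc (-1) 1) := by
    rw [hg_def]
    exact ha_C1.continuousOn_derivWithin (uniqueDiffOn_Icc (by norm_num)) le_rfl
  obtain ⟨C, hC⟩ := isCompact_Icc.exists_bound_of_continuousOn hg_cont
  obtain ⟨M, hM_def⟩ : ∃ M : ℝ, M = max C 1 := ⟨_, rfl⟩
  have hM0 : (0:ℝ) < M := hM_def ▸ lt_of_lt_of_le one_pos (le_max_right _ _)
  have hgM : ∀ x ∈ Icc (-1:ℝ) 1, |g x| ≤ M :=
    fun x hx => hM_def ▸ le_trans (hC x hx) (le_max_left _ _)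
  have hderiv : ∀ x ∈ Ioo (-1:ℝ) 1, HasDerivAt a (g x) x := by
    intro x hx
    have h1 : Icc (-1:ℝ) 1 ∈ nhds x := Icc_mem_nhds hx.1 hx.2
    have h2 := (ha_C1.differentiableOn one_ne_zero x (hIoo hx)).differentiableAt h1
    have h3 : g x = deriv a x := by rw [hg_def]; exact derivWithin_of_mem_nhds h1
    rw [h3]; exact h2.hasDerivAt
  have ha_contOn : ContinuousOn a (Icc (-1:ℝ) 1) := ha_C1.continuousOn
  -- Lipschitz bounds
  have hlip1 : ∀ x ∈ Ioo (-1:ℝ) 1, a x ≤ M * (1 - x) := by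
    intro x hx
    have h1x : (0:ℝ) < 1 - x := by linarith [hx.2]
    obtain ⟨k, hk, hkeq⟩ := exists_hasDerivAt_eq_slope a g hx.2
      (ha_contOn.mono (Icc_subset_Icc hx.1.le le_rfl))
      (fun t ht => hderiv t ⟨lt_trans hx.1 ht.1, ht.2⟩)
    have hkI : k ∈ Icc (-1:ℝ) 1 := ⟨(lt_trans hx.1 hk.1).le, hk.2.le⟩
    have habs := hgM k hkI
    have hlow := (abs_le.mp habs).1
    rw [ha_deg.2] at hkeq
    have h2 : g k * (1 - x) = -a x := by
      rw [hkeq]; field_simp; ring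
    nlinarith [h2, hlow, h1x.le]
  have hlip2 : ∀ x ∈ Ioo (-1:ℝ) 1, a x ≤ M * (x + 1) := by
    intro x hx
    have h1x : (0:ℝ) < x + 1 := by linarith [hx.1]
    obtain ⟨k, hk, hkeq⟩ := exists_hasDerivAt_eq_slope a g hx.1
      (ha_contOn.mono (Icc_subset_Icc le_rfl hx.2.le))
      (fun t ht => hderiv t ⟨ht.1, lt_trans ht.2 hx.2⟩)
    have hkI : k ∈ Icc (-1:ℝ) 1 := ⟨hk.1.le, (lt_trans hk.2 hx.2).le⟩
    have habs := hgM k hkI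
    have hup := (abs_le.mp habs).2
    rw [ha_deg.1] at hkeq
    have h2 : g k * (x + 1) = a x := by
      rw [hkeq, sub_neg_eq_add, sub_zero, div_mul_cancel₀ _ h1x.ne']
    nlinarith [h2, hup, h1x.le]
  -- boundary values of v
  have hv1 : v 1 = 0 := by
    by_contra hL
    have hcv : Tendsto v (nhdsWithin 1 (Ioo (-1:ℝ) 1)) (nhds (v 1)) :=
      ((hv_cont 1 (right_mem_Icc.mpr (by norm_num))).mono_left (nhdsWithin_mono 1 hIoo))
    have hev : ∀ᶠ x in nhdsWithin 1 (Ioo (-1:ℝ) 1), |v 1| / 2 < |v x| :=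
      (hcv.abs).eventually (eventually_gt_nhds (half_lt_self (abs_pos.mpr hL)))
    obtain ⟨x₀, hx₀, hP⟩ := aux_extract_right hev
    have hc' : (0:ℝ) < v 1 ^ 2 / (4 * M) := by positivity
    refine aux_not_int_right 1 le_rfl hc' hx₀ ?_
    refine (hu_a.mono_set (Ioo_subset_Ioo hx₀.1.le le_rfl)).mono'
      ((measurable_const.div ((measurable_const.sub measurable_id).pow_const 1)).aestronglyMeasurable) ?_
    filter_upwards [ae_restrict_mem measurableSet_Ioo] with x hx
    have hx1 : x ∈ Ioo (-1:ℝ) 1 := ⟨lt_trans hx₀.1 hx.1, hx.2⟩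
    have hax := ha_pos x hx1
    have hvx := hv_eq x hx1
    have h1x : (0:ℝ) < 1 - x := by linarith [hx.2]
    have hq : v 1 ^ 2 / 4 ≤ v x ^ 2 := by
      have h := (hP x hx).le
      have := pow_le_pow_left₀ (by positivity) h 2
      rw [sq_abs] at this
      calc v 1 ^ 2 / 4 = (|v 1| / 2) ^ 2 := by rw [div_pow, sq_abs]; norm_num
        _ ≤ v x ^ 2 := this
    have hb : v 1 ^ 2 / (4 * M) ≤ a x * u' x ^ 2 * (1 - x) := by
      rw [div_le_iff₀ (by positivity)]
      have h2 : v x ^ 2 = a x * (a x * u' x ^ 2) := by rw [hvx]; ring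
      have h3 : a x * (a x * u' x ^ 2) ≤ (M * (1 - x)) * (a x * u' x ^ 2) :=
        mul_le_mul_of_nonneg_right (hlip1 x hx1) (by positivity)
      nlinarith [h2, h3, hq]
    rw [Real.norm_eq_abs, abs_of_nonneg (by positivity), pow_one, div_le_iff₀ h1x]
    linarith [hb]
  have hvm1 : v (-1) = 0 := by
    by_contra hL
    have hcv : Tendsto v (nhdsWithin (-1) (Ioo (-1:ℝ) 1)) (nhds (v (-1))) :=
      ((hv_cont (-1) (left_mem_Icc.mpr (by norm_num))).mono_left (nhdsWithin_mono (-1) hIoo))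
    have hev : ∀ᶠ x in nhdsWithin (-1) (Ioo (-1:ℝ) 1), |v (-1)| / 2 < |v x| :=
      (hcv.abs).eventually (eventually_gt_nhds (half_lt_self (abs_pos.mpr hL)))
    obtain ⟨x₀, hx₀, hP⟩ := aux_extract_left hev
    have hc' : (0:ℝ) < v (-1) ^ 2 / (4 * M) := by positivity
    refine aux_not_int_left 1 le_rfl hc' hx₀ ?_
    refine (hu_a.mono_set (Ioo_subset_Ioo le_rfl hx₀.2.le)).mono'
      ((measurable_const.div ((measurable_id.add measurable_const).pow_const 1)).aestronglyMeasurable) ?_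
    filter_upwards [ae_restrict_mem measurableSet_Ioo] with x hx
    have hx1 : x ∈ Ioo (-1:ℝ) 1 := ⟨hx.1, lt_trans hx.2 hx₀.2⟩
    have hax := ha_pos x hx1
    have hvx := hv_eq x hx1
    have h1x : (0:ℝ) < x + 1 := by linarith [hx.1]
    have hq : v (-1) ^ 2 / 4 ≤ v x ^ 2 := by
      have h := (hP x hx).le
      have := pow_le_pow_left₀ (by positivity) h 2
      rw [sq_abs] at this
      calc v (-1) ^ 2 / 4 = (|v (-1)| / 2) ^ 2 := by rw [div_pow, sq_abs]; norm_num
        _ ≤ v x ^ 2 := this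
    have hb : v (-1) ^ 2 / (4 * M) ≤ a x * u' x ^ 2 * (x + 1) := by
      rw [div_le_iff₀ (by positivity)]
      have h2 : v x ^ 2 = a x * (a x * u' x ^ 2) := by rw [hvx]; ring
      have h3 : a x * (a x * u' x ^ 2) ≤ (M * (x + 1)) * (a x * u' x ^ 2) :=
        mul_le_mul_of_nonneg_right (hlip2 x hx1) (by positivity)
      nlinarith [h2, h3, hq]
    rw [Real.norm_eq_abs, abs_of_nonneg (by positivity), pow_one, div_le_iff₀ h1x]
    linarith [hb]
  -- part (i)
  have part_i1 : Tendsto (fun x => a x * u' x) (nhdsWithin (-1) (Ioo (-1:ℝ) 1)) (nhds 0) := by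
    have hcv : Tendsto v (nhdsWithin (-1) (Ioo (-1:ℝ) 1)) (nhds 0) := by
      have := ((hv_cont (-1) (left_mem_Icc.mpr (by norm_num))).mono_left (nhdsWithin_mono (-1) hIoo))
      rwa [hvm1] at this
    refine hcv.congr' ?_
    filter_upwards [self_mem_nhdsWithin] with x hx using hv_eq x hx
  have part_i2 : Tendsto (fun x => a x * u' x) (nhdsWithin 1 (Ioo (-1:ℝ) 1)) (nhds 0) := by
    have hcv : Tendsto v (nhdsWithin 1 (Ioo (-1:ℝ) 1)) (nhds 0) := by
      have := ((hv_cont 1 (right_mem_Icc.mpr (by norm_num))).mono_left (nhdsWithin_mono 1 hIoo))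
      rwa [hv1] at this
    refine hcv.congr' ?_
    filter_upwards [self_mem_nhdsWithin] with x hx using hv_eq x hx
  -- part (ii)
  have hu_cont : ContinuousOn u (Ioo (-1:ℝ) 1) := fun x hx =>
    (hu_diff x hx).continuousAt.continuousWithinAt
  obtain ⟨B, hB⟩ := isCompact_Icc.exists_bound_of_continuousOn hv_cont
  obtain ⟨A, hA⟩ := isCompact_Icc.exists_bound_of_continuousOn ha_contOn
  obtain ⟨w', hw'_def⟩ : ∃ w' : ℝ → ℝ, w' = fun x => g x * u x + v x := ⟨_, rfl⟩
  have hw'_app : ∀ x, w' x = g x * u x + v x := fun x => by rw [hw'_def]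
  have hw'_contOn : ContinuousOn w' (Ioo (-1:ℝ) 1) := by
    rw [hw'_def]
    exact ((hg_cont.mono hIoo).mul hu_cont).add (hv_cont.mono hIoo)
  have hF_int : IntegrableOn (fun x => w' x ^ 2) (Ioo (-1:ℝ) 1) := by
    refine ((hu_L2.const_mul (2 * M ^ 2)).add
      ((integrableOn_const measure_Ioo_lt_top.ne) :
        IntegrableOn (fun _ => 2 * B ^ 2) _ _)).mono'
      ((hw'_contOn.pow 2).aestronglyMeasurable measurableSet_Ioo) ?_
    filter_upwards [ae_restrict_mem measurableSet_Ioo] with x hx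
    have h1 : |g x| ≤ M := hgM x (hIoo hx)
    have h2 : |v x| ≤ B := by have := hB x (hIoo hx); rwa [Real.norm_eq_abs] at this
    have h3 : g x ^ 2 ≤ M ^ 2 := sq_le_sq' (abs_le.mp h1).1 (abs_le.mp h1).2
    have h4 : v x ^ 2 ≤ B ^ 2 := sq_le_sq' (abs_le.mp h2).1 (abs_le.mp h2).2
    rw [Real.norm_eq_abs, abs_of_nonneg (sq_nonneg _)]
    simp only [Pi.add_apply, hw'_app x]
    nlinarith [sq_nonneg (g x * u x - v x),
      mul_le_mul_of_nonneg_right h3 (sq_nonneg (u x)), sq_nonneg (u x)]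
  have hw'_L1 : IntegrableOn w' (Ioo (-1:ℝ) 1) := by
    refine ((hF_int.add ((integrableOn_const measure_Ioo_lt_top.ne) :
        IntegrableOn (fun _ => (1:ℝ)) _ _)).const_mul (1/2)).mono'
      (hw'_contOn.aestronglyMeasurable measurableSet_Ioo) ?_
    filter_upwards [ae_restrict_mem measurableSet_Ioo] with x hx
    rw [Real.norm_eq_abs]
    simp only [Pi.add_apply]
    nlinarith [sq_nonneg (|w' x| - 1), sq_abs (w' x), abs_nonneg (w' x)]
  have hderiv_w : ∀ x ∈ Ioo (-1:ℝ) 1, HasDerivAt (fun y => a y * u y) (w' x) x := by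
    intro x hx
    have h := (hderiv x hx).mul (hu_diff x hx)
    have heq : w' x = g x * u x + a x * u' x := by rw [hw'_app x, hv_eq x hx]
    rw [heq]; exact h
  have hdiff_w : DifferentiableOn ℝ (fun x => a x * u x) (Ioo (-1:ℝ) 1) :=
    fun x hx => ((hderiv_w x hx).differentiableAt).differentiableWithinAt
  have hderiv_eq : ∀ x ∈ Ioo (-1:ℝ) 1, deriv (fun y => a y * u y) x = w' x :=
    fun x hx => (hderiv_w x hx).deriv
  have hderiv_sq_int : IntegrableOn (fun x => (deriv (fun y => a y * u y) x) ^ 2)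
      (Ioo (-1:ℝ) 1) := by
    refine hF_int.congr_fun (fun x hx => ?_) measurableSet_Ioo
    rw [hderiv_eq x hx]
  have hau_L2 : IntegrableOn (fun x => (a x * u x) ^ 2) (Ioo (-1:ℝ) 1) := by
    refine (hu_L2.const_mul ((max A 0) ^ 2)).mono'
      ((((ha_contOn.mono hIoo).mul hu_cont).pow 2).aestronglyMeasurable measurableSet_Ioo) ?_
    filter_upwards [ae_restrict_mem measurableSet_Ioo] with x hx
    have h1 : |a x| ≤ max A 0 :=
      le_trans (by rw [← Real.norm_eq_abs]; exact hA x (hIoo hx)) (le_max_left _ _)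
    have h3 : a x ^ 2 ≤ (max A 0) ^ 2 := sq_le_sq' (abs_le.mp h1).1 (abs_le.mp h1).2
    rw [Real.norm_eq_abs, abs_of_nonneg (sq_nonneg _)]
    nlinarith [mul_le_mul_of_nonneg_right h3 (sq_nonneg (u x))]
  -- primitive representation
  have hGint : Integrable ((Ioo (-1:ℝ) 1).indicator w') volume :=
    hw'_L1.integrable_indicator measurableSet_Ioo
  obtain ⟨P, hP_def⟩ : ∃ P : ℝ → ℝ,
      P = fun x => ∫ t in (0:ℝ)..x, (Ioo (-1:ℝ) 1).indicator w' t := ⟨_, rfl⟩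
  have hPcont : Continuous P := by rw [hP_def]; exact hGint.continuous_primitive 0
  have hrep : ∀ x ∈ Ioo (-1:ℝ) 1, a x * u x = a 0 * u 0 + P x := by
    intro x hx
    have hsub : uIcc 0 x ⊆ Ioo (-1:ℝ) 1 := by
      intro t ht
      rw [Set.mem_uIcc] at ht
      constructor
      · rcases ht with h | h
        · linarith [h.1]
        · linarith [h.1, hx.1]
      · rcases ht with h | h
        · linarith [h.2, hx.2]
        · linarith [h.2]
    have hii : IntervalIntegrable w' volume 0 x := by
      rw [intervalIntegrable_iff]
      exact hw'_L1.mono_set (Set.uIoc_subset_uIcc.trans hsub)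
    have hFTC := intervalIntegral.integral_eq_sub_of_hasDerivAt
      (fun t ht => hderiv_w t (hsub ht)) hii
    have hPx : P x = ∫ t in (0:ℝ)..x, w' t := by
      rw [hP_def]
      exact intervalIntegral.integral_congr (fun t ht => Set.indicator_of_mem (hsub ht) w')
    rw [hPx, hFTC]; ring
  have hten1 : Tendsto (fun x => a x * u x) (nhdsWithin 1 (Ioo (-1:ℝ) 1))
      (nhds (a 0 * u 0 + P 1)) := by
    have hc : Tendsto (fun x => a 0 * u 0 + P x) (nhdsWithin 1 (Ioo (-1:ℝ) 1))
        (nhds (a 0 * u 0 + P 1)) :=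
      ((continuous_const.add hPcont).tendsto 1).mono_left nhdsWithin_le_nhds
    refine hc.congr' ?_
    filter_upwards [self_mem_nhdsWithin] with x hx using (hrep x hx).symm
  have htenm1 : Tendsto (fun x => a x * u x) (nhdsWithin (-1) (Ioo (-1:ℝ) 1))
      (nhds (a 0 * u 0 + P (-1))) := by
    have hc : Tendsto (fun x => a 0 * u 0 + P x) (nhdsWithin (-1) (Ioo (-1:ℝ) 1))
        (nhds (a 0 * u 0 + P (-1))) :=
      ((continuous_const.add hPcont).tendsto (-1)).mono_left nhdsWithin_le_nhds
    refine hc.congr' ?_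
    filter_upwards [self_mem_nhdsWithin] with x hx using (hrep x hx).symm
  have hL1 : ∀ L : ℝ, Tendsto (fun x => a x * u x) (nhdsWithin 1 (Ioo (-1:ℝ) 1)) (nhds L) →
      L = 0 := by
    intro L hten
    by_contra hL
    have hev : ∀ᶠ x in nhdsWithin 1 (Ioo (-1:ℝ) 1), |L| / 2 < |a x * u x| :=
      (hten.abs).eventually (eventually_gt_nhds (half_lt_self (abs_pos.mpr hL)))
    obtain ⟨x₀, hx₀, hP2⟩ := aux_extract_right hev
    have hc' : (0:ℝ) < L ^ 2 / (4 * M ^ 2) := by positivity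
    refine aux_not_int_right 2 one_le_two hc' hx₀ ?_
    refine (hu_L2.mono_set (Ioo_subset_Ioo hx₀.1.le le_rfl)).mono'
      ((measurable_const.div
        ((measurable_const.sub measurable_id).pow_const 2)).aestronglyMeasurable) ?_
    filter_upwards [ae_restrict_mem measurableSet_Ioo] with x hx
    have hx1 : x ∈ Ioo (-1:ℝ) 1 := ⟨lt_trans hx₀.1 hx.1, hx.2⟩
    have hax := ha_pos x hx1
    have h1x : (0:ℝ) < 1 - x := by linarith [hx.2]
    have hq : L ^ 2 / 4 ≤ (a x * u x) ^ 2 := by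
      have h := (hP2 x hx).le
      have h2 := pow_le_pow_left₀ (by positivity) h 2
      rw [sq_abs] at h2
      calc L ^ 2 / 4 = (|L| / 2) ^ 2 := by
            rw [div_pow, sq_abs]; norm_num
        _ ≤ (a x * u x) ^ 2 := h2
    have hsq : a x ^ 2 ≤ M ^ 2 * (1 - x) ^ 2 := by
      nlinarith [hlip1 x hx1, hax.le, h1x.le]
    rw [Real.norm_eq_abs, abs_of_nonneg (by positivity),
      div_le_iff₀ (by positivity : (0:ℝ) < (1 - x) ^ 2), div_le_iff₀ (by positivity : (0:ℝ) < 4 * M ^ 2)]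
    nlinarith [hq, mul_le_mul_of_nonneg_right hsq (sq_nonneg (u x)), sq_nonneg (u x)]
  have hLm1 : ∀ L : ℝ, Tendsto (fun x => a x * u x) (nhdsWithin (-1) (Ioo (-1:ℝ) 1)) (nhds L) →
      L = 0 := by
    intro L hten
    by_contra hL
    have hev : ∀ᶠ x in nhdsWithin (-1) (Ioo (-1:ℝ) 1), |L| / 2 < |a x * u x| :=
      (hten.abs).eventually (eventually_gt_nhds (half_lt_self (abs_pos.mpr hL)))
    obtain ⟨x₀, hx₀, hP2⟩ := aux_extract_left hev
    have hc' : (0:ℝ) < L ^ 2 / (4 * M ^ 2) := by positivity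
    refine aux_not_int_left 2 one_le_two hc' hx₀ ?_
    refine (hu_L2.mono_set (Ioo_subset_Ioo le_rfl hx₀.2.le)).mono'
      ((measurable_const.div
        ((measurable_id.add measurable_const).pow_const 2)).aestronglyMeasurable) ?_
    filter_upwards [ae_restrict_mem measurableSet_Ioo] with x hx
    have hx1 : x ∈ Ioo (-1:ℝ) 1 := ⟨hx.1, lt_trans hx.2 hx₀.2⟩
    have hax := ha_pos x hx1
    have h1x : (0:ℝ) < x + 1 := by linarith [hx.1]
    have hq : L ^ 2 / 4 ≤ (a x * u x) ^ 2 := by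
      have h := (hP2 x hx).le
      have h2 := pow_le_pow_left₀ (by positivity) h 2
      rw [sq_abs] at h2
      calc L ^ 2 / 4 = (|L| / 2) ^ 2 := by
            rw [div_pow, sq_abs]; norm_num
        _ ≤ (a x * u x) ^ 2 := h2
    have hsq : a x ^ 2 ≤ M ^ 2 * (x + 1) ^ 2 := by
      nlinarith [hlip2 x hx1, hax.le, h1x.le]
    rw [Real.norm_eq_abs, abs_of_nonneg (by positivity),
      div_le_iff₀ (by positivity : (0:ℝ) < (x + 1) ^ 2), div_le_iff₀ (by positivity : (0:ℝ) < 4 * M ^ 2)]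
    nlinarith [hq, mul_le_mul_of_nonneg_right hsq (sq_nonneg (u x)), sq_nonneg (u x)]
  rw [hL1 _ hten1] at hten1
  rw [hLm1 _ htenm1] at htenm1
  exact ⟨⟨part_i1, part_i2⟩, htenm1, hten1, hau_L2, hdiff_w, hderiv_sq_int⟩
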